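/- arXiv:1109.1460 — 4 statements merged into one kernel-verified Lean document; each statement's English description precedes it below -/
import Mathlib

section
/- Let G₀ be a finite directed graph such that: (1) every non-absorbing vertex has out-degree exactly 2; (2) every non-absorbing vertex has in-degree at most 2; (3) every non-absorbing vertex v with in-degree 2 has some ancestor w (a vertex with a directed path from w to v of positive length) whose in-degree is strictly less than 2. Then G₀ is absorbing: from every vertex there is a directed path to an absorbing vertex (a vertex of out-degree 0). -/
/-- A vertex is absorbing if it has no outgoing edges. -/
def Absorbing {V : Type*} (E : V → V → Prop) (v : V) : Prop := ∀ w, ¬ E v w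

open Classical in
/-- If every non-absorbing vertex has out-degree exactly 2 and in-degree at
most 2, and every non-absorbing vertex of in-degree 2 has an ancestor of
in-degree strictly less than 2, then from every vertex there is a directed
path to an absorbing vertex. -/
theorem stmt3 {V : Type*} [Fintype V] (E : V → V → Prop)
    (hout : ∀ v, ¬ Absorbing E v → (Finset.univ.filter fun w => E v w).card = 2)
    (hin : ∀ v, ¬ Absorbing E v → (Finset.univ.filter fun w => E w v).card ≤ 2)
    (hanc : ∀ v, ¬ Absorbing E v → (Finset.univ.filter fun w => E w v).card = 2 →
      ∃ w, Relation.TransGen E w v ∧ (Finset.univ.filter fun u => E u w).card < 2) :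
    ∀ v, ∃ a, Relation.ReflTransGen E v a ∧ Absorbing E a := by
  classical
  by_contra hcon
  push_neg at hcon
  obtain ⟨v₀, hv₀⟩ := hcon
  set P : V → Prop := fun v => ∃ a, Relation.ReflTransGen E v a ∧ Absorbing E a with hP
  set S : Finset V := Finset.univ.filter (fun v => ¬ P v) with hS
  have hmem : ∀ v, v ∈ S ↔ ¬ P v := by
    intro v; simp [hS]
  have hv₀S : v₀ ∈ S := by
    rw [hmem]
    intro ⟨a, ha, haabs⟩
    exact hv₀ a ha haabs
  -- vertices in S are non-absorbing
  have hna : ∀ v ∈ S, ¬ Absorbing E v := by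
    intro v hv habs
    exact (hmem v).mp hv ⟨v, Relation.ReflTransGen.refl, habs⟩
  -- successor closure
  have hsucc : ∀ v ∈ S, ∀ w, E v w → w ∈ S := by
    intro v hv w hvw
    rw [hmem]
    intro ⟨a, ha, haabs⟩
    exact (hmem v).mp hv ⟨a, Relation.ReflTransGen.head hvw ha, haabs⟩
  -- out-neighborhood within S equals full out-neighborhood
  have houtS : ∀ v ∈ S, (S.filter fun w => E v w) = Finset.univ.filter fun w => E v w := by
    intro v hv
    apply Finset.Subset.antisymm
    · exact Finset.filter_subset_filter _ (Finset.subset_univ S)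
    · intro w hw
      rw [Finset.mem_filter] at hw ⊢
      exact ⟨hsucc v hv w hw.2, hw.2⟩
  -- double counting
  have hcount : ∑ v ∈ S, (S.filter fun w => E v w).card
      = ∑ w ∈ S, (S.filter fun v => E v w).card := by
    simp only [Finset.card_filter]
    exact Finset.sum_comm
  have hlhs : ∑ v ∈ S, (S.filter fun w => E v w).card = 2 * S.card := by
    rw [Finset.sum_congr rfl (fun v hv => by rw [houtS v hv, hout v (hna v hv)])]
    simp [mul_comm]
  have hle : ∀ w ∈ S, (S.filter fun v => E v w).card ≤ 2 := by
    intro w hw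
    exact le_trans (Finset.card_le_card (Finset.filter_subset_filter _ (Finset.subset_univ S)))
      (hin w (hna w hw))
  -- each in-degree within S must be exactly 2
  have heq2 : ∀ w ∈ S, (S.filter fun v => E v w).card = 2 := by
    by_contra h
    push_neg at h
    obtain ⟨w₀, hw₀, hne⟩ := h
    have hlt : (S.filter fun v => E v w₀).card < 2 := lt_of_le_of_ne (hle w₀ hw₀) hne
    have : ∑ w ∈ S, (S.filter fun v => E v w).card < ∑ w ∈ S, 2 :=
      Finset.sum_lt_sum (fun w hw => hle w hw) ⟨w₀, hw₀, hlt⟩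
    rw [← hcount, hlhs, Finset.sum_const, smul_eq_mul, mul_comm] at this
    exact lt_irrefl _ this
  -- hence the in-neighborhood of each w ∈ S lies entirely in S, with full in-degree 2
  have hinfull : ∀ w ∈ S, (S.filter fun v => E v w) = Finset.univ.filter fun v => E v w := by
    intro w hw
    apply Finset.eq_of_subset_of_card_le
      (Finset.filter_subset_filter _ (Finset.subset_univ S))
    rw [heq2 w hw]
    exact hin w (hna w hw)
  have hindeg2 : ∀ w ∈ S, (Finset.univ.filter fun v => E v w).card = 2 := by
    intro w hw
    rw [← hinfull w hw]
    exact heq2 w hw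
  -- predecessor closure
  have hpred : ∀ w v, E w v → v ∈ S → w ∈ S := by
    intro w v hwv hv
    have : w ∈ S.filter fun u => E u v := by
      rw [hinfull v hv]
      simp [hwv]
    exact (Finset.mem_filter.mp this).1
  have hanc_closed : ∀ w v, Relation.TransGen E w v → v ∈ S → w ∈ S := by
    intro w v h
    induction h with
    | single h => exact fun hv => hpred _ _ h hv
    | tail _ e ih => exact fun hv => ih (hpred _ _ e hv)
  -- contradiction via hanc
  obtain ⟨w, hwv, hwlt⟩ := hanc v₀ (hna v₀ hv₀S) (hindeg2 v₀ hv₀S)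
  have hwS : w ∈ S := hanc_closed w v₀ hwv hv₀S
  rw [hindeg2 w hwS] at hwlt
  exact lt_irrefl _ hwlt
end

section
/- Let G be a finite directed graph containing a spanning subgraph G₀ (same vertex set, edge set a subset of that of G) such that in G₀: every vertex that is non-absorbing in G has out-degree exactly 2, in-degree at most 2, and every such vertex of in-degree 2 has an ancestor in G₀ of in-degree less than 2. Then G is absorbing: from every vertex of G there is a directed path in G to a vertex with no outgoing edges in G. -/
/-!
Suppose some vertex `v` cannot reach an absorbing vertex of `G`, and let `S` be the set of
vertices reachable from `v` in `G₀`. No vertex of `S` is absorbing, and `S` is closed under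
`G₀`-successors, so the `2 |S|` edges leaving `S` all end in `S`. As every in-degree is at most
`2`, each vertex of `S` then has in-degree exactly `2` with all its in-neighbours in `S`. Hence
`S` is closed under `G₀`-predecessors as well, so it contains the ancestor of `v` of in-degree
less than `2` that the hypothesis provides: a contradiction.
-/

open Finset

section Degrees

variable {V : Type*} {R : V → V → Prop} [DecidableRel R]

theorem sum_card_succ_eq_sum_card_pred (S : Finset V) :
    ∑ u ∈ S, #{w ∈ S | R u w} = ∑ w ∈ S, #{u ∈ S | R u w} := by
  simp only [card_filter]
  exact sum_comm

variable [Fintype V] {S : Finset V} {d : ℕ}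

theorem card_pred_within_eq_of_succ_closed (hclosed : ∀ u ∈ S, ∀ w, R u w → w ∈ S)
    (hout : ∀ u ∈ S, #{w | R u w} = d) (hin : ∀ w ∈ S, #{u | R u w} ≤ d) :
    ∀ w ∈ S, #{u ∈ S | R u w} = d := by
  have hle : ∀ w ∈ S, #{u ∈ S | R u w} ≤ d := fun w hw =>
    (card_le_card (filter_subset_filter _ (subset_univ S))).trans (hin w hw)
  have hsucc : ∀ u ∈ S, #{w ∈ S | R u w} = d := fun u hu => by
    rw [← hout u hu]
    congr 1
    ext w
    simpa using hclosed u hu w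
  refine (sum_eq_sum_iff_of_le hle).1 ?_
  rw [← sum_card_succ_eq_sum_card_pred, sum_congr rfl hsucc]

theorem pred_mem_and_card_pred_eq_of_succ_closed (hclosed : ∀ u ∈ S, ∀ w, R u w → w ∈ S)
    (hout : ∀ u ∈ S, #{w | R u w} = d) (hin : ∀ w ∈ S, #{u | R u w} ≤ d) (w : V)
    (hw : w ∈ S) : (∀ u, R u w → u ∈ S) ∧ #{u | R u w} = d := by
  have hwithin := card_pred_within_eq_of_succ_closed hclosed hout hin w hw
  have hsub : ({u ∈ S | R u w} : Finset V) ⊆ ({u | R u w} : Finset V) :=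
    filter_subset_filter _ (subset_univ S)
  have heq := eq_of_subset_of_card_le hsub (hwithin ▸ hin w hw)
  refine ⟨fun u hu => ?_, heq ▸ hwithin⟩
  have : u ∈ ({u ∈ S | R u w} : Finset V) := heq ▸ (mem_filter_univ u).2 hu
  exact (mem_filter.1 this).1

end Degrees

theorem Relation.TransGen.mem_of_pred_closed {V : Type*} {R : V → V → Prop} {s : Set V}
    (hclosed : ∀ w ∈ s, ∀ u, R u w → u ∈ s) {u w : V} (h : Relation.TransGen R u w)
    (hw : w ∈ s) : u ∈ s := by
  induction h with
  | single h => exact hclosed _ hw _ h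
  | tail _ h ih => exact ih (hclosed _ hw _ h)

open Classical in
theorem stmt4_general {V : Type*} [Fintype V] (E E₀ : V → V → Prop)
    (hsub : ∀ v w, E₀ v w → E v w)
    (hout : ∀ v, ¬ Absorbing E v → (Finset.univ.filter fun w => E₀ v w).card = 2)
    (hin : ∀ v, ¬ Absorbing E v → (Finset.univ.filter fun w => E₀ w v).card ≤ 2)
    (hanc : ∀ v, ¬ Absorbing E v → (Finset.univ.filter fun w => E₀ w v).card = 2 →
      ∃ w, Relation.TransGen E₀ w v ∧ (Finset.univ.filter fun u => E₀ u w).card < 2) :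
    ∀ v, ∃ a, Relation.ReflTransGen E v a ∧ Absorbing E a := by
  intro v
  by_contra! hstuck
  set S : Finset V := {u | Relation.ReflTransGen E₀ v u}
  have hlive : ∀ u ∈ S, ¬ Absorbing E u := fun u hu =>
    hstuck u (Relation.ReflTransGen.mono hsub _ _ ((mem_filter_univ u).1 hu))
  have hclosed : ∀ u ∈ S, ∀ w, E₀ u w → w ∈ S := fun u hu w huw =>
    (mem_filter_univ w).2 (((mem_filter_univ u).1 hu).tail huw)
  have hdeg := pred_mem_and_card_pred_eq_of_succ_closed hclosed
    (fun u hu => hout u (hlive u hu)) (fun u hu => hin u (hlive u hu))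
  have hvS : v ∈ S := (mem_filter_univ v).2 .refl
  obtain ⟨w, hwv, hw⟩ := hanc v (hlive v hvS) (hdeg v hvS).2
  have hwS : w ∈ S := hwv.mem_of_pred_closed (s := (S : Set V)) (fun x hx => (hdeg x hx).1) hvS
  exact hw.ne (hdeg w hwS).2

open Classical in
/-- Let `G` (edge relation `E`) contain a spanning subgraph `G₀` (edge relation
`E₀`, same vertex set, `E₀ ⊆ E`, with the same absorbing vertices) such that in
`G₀` every vertex that is non-absorbing in `G` has out-degree exactly 2,
in-degree at most 2, and every such vertex of in-degree 2 has an ancestor in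
`G₀` of in-degree less than 2.  Then from every vertex there is a directed path
in `G` to a vertex with no outgoing edges in `G`. -/
theorem stmt4 {V : Type*} [Fintype V] (E E₀ : V → V → Prop)
    (hsub : ∀ v w, E₀ v w → E v w)
    (habs : ∀ v, Absorbing E₀ v ↔ Absorbing E v)
    (hout : ∀ v, ¬ Absorbing E v → (Finset.univ.filter fun w => E₀ v w).card = 2)
    (hin : ∀ v, ¬ Absorbing E v → (Finset.univ.filter fun w => E₀ w v).card ≤ 2)
    (hanc : ∀ v, ¬ Absorbing E v → (Finset.univ.filter fun w => E₀ w v).card = 2 →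
      ∃ w, Relation.TransGen E₀ w v ∧ (Finset.univ.filter fun u => E₀ u w).card < 2) :
    ∀ v, ∃ a, Relation.ReflTransGen E v a ∧ Absorbing E a :=
  stmt4_general E E₀ hsub hout hin hanc
end

section
/- In a finite directed graph where every non-absorbing vertex has out-degree exactly 2 and in-degree at most 2, if the set of wandering vertices is nonempty then it contains a vertex all of whose in-neighbors are wandering and which has in-degree exactly 2; hence no wandering vertex has an ancestor of in-degree less than 2. -/
/-- A vertex is wandering if no directed path from it reaches an absorbing vertex. -/
def Wandering {V : Type*} (E : V → V → Prop) (v : V) : Prop :=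
  ¬ ∃ a, Relation.ReflTransGen E v a ∧ Absorbing E a

open Finset

theorem Finset.card_filter_rel_eq_of_card_filter_rel_eq {α : Type*} (r : α → α → Prop)
    [DecidableRel r] {s : Finset α} {k : ℕ}
    (hout : ∀ a ∈ s, #{b ∈ s | r a b} = k) (hin : ∀ b ∈ s, #{a ∈ s | r a b} ≤ k) :
    ∀ b ∈ s, #{a ∈ s | r a b} = k := by
  have hsum : ∑ b ∈ s, #{a ∈ s | r a b} = ∑ _b ∈ s, k :=
    (sum_card_bipartiteAbove_eq_sum_card_bipartiteBelow r).symm.trans (sum_congr rfl hout)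
  exact (sum_eq_sum_iff_of_le hin).1 hsum

theorem Relation.TransGen.head_of_forall_rel {α : Type*} {r : α → α → Prop} {p : α → Prop}
    (hp : ∀ b, p b → ∀ a, r a b → p a) {a b : α} (hab : Relation.TransGen r a b) (hb : p b) :
    p a := by
  induction hab using Relation.TransGen.head_induction_on with
  | single h => exact hp _ hb _ h
  | head h _ ih => exact hp _ ih _ h

section Wandering

variable {V : Type*} {E : V → V → Prop} {v w : V}

theorem Wandering.not_absorbing (hv : Wandering E v) : ¬ Absorbing E v :=
  fun ha => hv ⟨v, .refl, ha⟩

theorem Wandering.of_rel (hv : Wandering E v) (hvw : E v w) : Wandering E w :=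
  fun ⟨a, hwa, ha⟩ => hv ⟨a, .head hvw hwa, ha⟩

variable [Fintype V] [DecidableRel E] {k : ℕ}

theorem Wandering.forall_rel_wandering_and_card_eq
    (hout : ∀ v, ¬ Absorbing E v → #{w | E v w} = k)
    (hin : ∀ v, ¬ Absorbing E v → #{u | E u v} ≤ k) (hv : Wandering E v) :
    (∀ u, E u v → Wandering E u) ∧ #{u | E u v} = k := by
  classical
  set W : Finset V := {x | Wandering E x}
  have hinW : ∀ x ∈ W, #{u ∈ W | E u x} = k := by
    refine card_filter_rel_eq_of_card_filter_rel_eq E (fun x hx => ?_) (fun x hx => ?_)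
    · have hx : Wandering E x := (mem_filter.1 hx).2
      rw [← hout x hx.not_absorbing]
      congr 1
      ext y
      simpa [W] using fun hxy => hx.of_rel hxy
    · exact (card_le_card (filter_subset_filter _ (subset_univ W))).trans
        (hin x (mem_filter.1 hx).2.not_absorbing)
  have hvW : v ∈ W := mem_filter.2 ⟨mem_univ v, hv⟩
  have heq : W.filter (E · v) = univ.filter (E · v) :=
    eq_of_subset_of_card_le (filter_subset_filter _ (subset_univ W))
      ((hin v hv.not_absorbing).trans (hinW v hvW).ge)
  refine ⟨fun u huv => ?_, heq ▸ hinW v hvW⟩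
  have hu : u ∈ W.filter (E · v) := heq ▸ mem_filter.2 ⟨mem_univ u, huv⟩
  exact (mem_filter.1 (mem_filter.1 hu).1).2

end Wandering

open Classical in
/-- If every non-absorbing vertex has out-degree exactly 2 and in-degree at
most 2, and some vertex is wandering, then there is a wandering vertex all of
whose in-neighbors are wandering and which has in-degree exactly 2; moreover no
wandering vertex has an ancestor of in-degree less than 2. -/
theorem stmt8 {V : Type*} [Fintype V] (E : V → V → Prop)
    (hout : ∀ v, ¬ Absorbing E v → (Finset.univ.filter fun w => E v w).card = 2)
    (hin : ∀ v, ¬ Absorbing E v → (Finset.univ.filter fun w => E w v).card ≤ 2)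
    (hne : ∃ v, Wandering E v) :
    (∃ v, Wandering E v ∧ (∀ u, E u v → Wandering E u) ∧
      (Finset.univ.filter fun u => E u v).card = 2) ∧
    ∀ v, Wandering E v →
      ¬ ∃ w, Relation.TransGen E w v ∧ (Finset.univ.filter fun u => E u w).card < 2 := by
  have key := fun v (hv : Wandering E v) => hv.forall_rel_wandering_and_card_eq hout hin
  refine ⟨?_, fun v hv ⟨w, hwv, hw⟩ => ?_⟩
  · obtain ⟨v, hv⟩ := hne
    exact ⟨v, hv, key v hv⟩
  · have hw' : Wandering E w := hwv.head_of_forall_rel (fun x hx => (key x hx).1) hv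
    exact hw.ne (key w hw').2
end

section
/- Let G₀ be a finite directed graph satisfying: every non-absorbing vertex has out-degree exactly 2 and in-degree at most 2, and every non-absorbing vertex of in-degree 2 has an ancestor of in-degree less than 2. Then the set of wandering vertices is empty. -/
lemma wand_not_abs {V : Type*} {E : V → V → Prop} {v : V} (h : Wandering E v) :
    ¬ Absorbing E v := fun ha => h ⟨v, Relation.ReflTransGen.refl, ha⟩

lemma wand_succ {V : Type*} {E : V → V → Prop} {v w : V} (h : Wandering E v) (e : E v w) :
    Wandering E w := fun ⟨a, hp, ha⟩ => h ⟨a, Relation.ReflTransGen.head e hp, ha⟩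

open Classical in
/-- If every non-absorbing vertex has out-degree exactly 2 and in-degree at
most 2, and every non-absorbing vertex of in-degree 2 has an ancestor of
in-degree less than 2, then there are no wandering vertices. -/
theorem stmt11 {V : Type*} [Fintype V] (E : V → V → Prop)
    (hout : ∀ v, ¬ Absorbing E v → (Finset.univ.filter fun w => E v w).card = 2)
    (hin : ∀ v, ¬ Absorbing E v → (Finset.univ.filter fun w => E w v).card ≤ 2)
    (hanc : ∀ v, ¬ Absorbing E v → (Finset.univ.filter fun w => E w v).card = 2 →
      ∃ w, Relation.TransGen E w v ∧ (Finset.univ.filter fun u => E u w).card < 2) :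
    ∀ v, ¬ Wandering E v := by
  set W : Finset V := Finset.univ.filter (Wandering E) with hW
  -- out-neighbors of a wandering vertex are all wandering
  have houtW : ∀ u ∈ W, (W.filter fun w => E u w).card = 2 := by
    intro u hu
    have hu' : Wandering E u := by simpa [hW] using hu
    have : (W.filter fun w => E u w) = (Finset.univ.filter fun w => E u w) := by
      ext w
      simp only [hW, Finset.mem_filter, Finset.mem_univ, true_and]
      exact ⟨fun ⟨_, h⟩ => h, fun h => ⟨wand_succ hu' h, h⟩⟩
    rw [this]
    exact hout u (wand_not_abs hu')
  -- double counting
  have hsum : ∑ v ∈ W, (W.filter fun u => E u v).card = 2 * W.card := by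
    have h1 : ∑ v ∈ W, (W.filter fun u => E u v).card
        = ∑ v ∈ W, ∑ u ∈ W, (if E u v then 1 else 0) := by
      refine Finset.sum_congr rfl fun v _ => ?_
      rw [Finset.card_filter]
    have h2 : ∑ u ∈ W, (W.filter fun w => E u w).card
        = ∑ u ∈ W, ∑ w ∈ W, (if E u w then 1 else 0) := by
      refine Finset.sum_congr rfl fun u _ => ?_
      rw [Finset.card_filter]
    rw [h1, Finset.sum_comm, ← h2]
    rw [Finset.sum_congr rfl houtW]
    rw [Finset.sum_const, smul_eq_mul, mul_comm]
  -- in-degree within W is at most 2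
  have hle : ∀ v ∈ W, (W.filter fun u => E u v).card ≤ 2 := by
    intro v hv
    have hv' : Wandering E v := by simpa [hW] using hv
    calc (W.filter fun u => E u v).card
        ≤ (Finset.univ.filter fun u => E u v).card :=
          Finset.card_le_card (Finset.filter_subset_filter _ (Finset.subset_univ W))
      _ ≤ 2 := hin v (wand_not_abs hv')
  -- hence in-degree within W is exactly 2 for every vertex in W
  have heq : ∀ v ∈ W, (W.filter fun u => E u v).card = 2 := by
    intro v hv
    by_contra hne
    have hlt : (W.filter fun u => E u v).card < 2 := lt_of_le_of_ne (hle v hv) hne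
    have hs := Finset.sum_lt_sum (f := fun v => (W.filter fun u => E u v).card)
      (g := fun _ => 2) hle ⟨v, hv, hlt⟩
    rw [Finset.sum_const, smul_eq_mul, mul_comm, ← hsum] at hs
    exact lt_irrefl _ hs
  -- every in-neighbor of a wandering vertex is wandering, and in-degree exactly 2
  have hkey : ∀ v, Wandering E v →
      ((Finset.univ.filter fun u => E u v).card = 2 ∧ ∀ u, E u v → Wandering E u) := by
    intro v hv
    have hvW : v ∈ W := by simp [hW, hv]
    have h2 : (W.filter fun u => E u v).card = 2 := heq v hvW
    have hsub : (W.filter fun u => E u v) ⊆ (Finset.univ.filter fun u => E u v) :=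
      Finset.filter_subset_filter _ (Finset.subset_univ W)
    have hle2 : (Finset.univ.filter fun u => E u v).card ≤ 2 := hin v (wand_not_abs hv)
    have hcardle : (Finset.univ.filter fun u => E u v).card ≤ (W.filter fun u => E u v).card := by
      rw [h2]; exact hle2
    have hset : (W.filter fun u => E u v) = (Finset.univ.filter fun u => E u v) :=
      Finset.eq_of_subset_of_card_le hsub hcardle
    constructor
    · exact le_antisymm hle2 (h2 ▸ Finset.card_le_card hsub)
    · intro u hu
      have : u ∈ (W.filter fun u => E u v) := by
        rw [hset]; simp [hu]
      have := (Finset.mem_filter.mp this).1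
      simpa [hW] using this
  -- ancestors of wandering vertices are wandering
  have hanc' : ∀ w v, Relation.TransGen E w v → Wandering E v → Wandering E w := by
    intro w v h
    induction h with
    | single e => exact fun hv => (hkey _ hv).2 _ e
    | tail _ e ih => exact fun hv => ih ((hkey _ hv).2 _ e)
  intro v hv
  obtain ⟨hdeg, _⟩ := hkey v hv
  obtain ⟨w, htg, hlt⟩ := hanc v (wand_not_abs hv) hdeg
  have hw : Wandering E w := hanc' w v htg hv
  have := (hkey w hw).1
  omega
end
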